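/- Let P = (1/2)P₁ + (1/2)P₂ where P₁ is uniform on [0, 1/2] and P₂ is the uniform discrete measure on {2/3, 5/6, 1}. Then lim_{n→∞} n² V_n(P) = 1/96. In particular the quantization dimension of P exists and equals 1. -/

import Mathlib

open MeasureTheory Set Filter Real
open scoped ENNReal

/-- Distortion error of a finite set of quantizers `γ` for the measure `P`. -/
noncomputable def distortion (P : Measure ℝ) (γ : Finset ℝ) : ℝ :=
  ∫ x, (⨅ c : γ, (x - (c : ℝ)) ^ 2) ∂P

/-- The `n`-th quantization error of `P`. -/
noncomputable def quantErr (P : Measure ℝ) (n : ℕ) : ℝ :=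
  sInf {v : ℝ | ∃ γ : Finset ℝ, γ.Nonempty ∧ γ.card ≤ n ∧ v = distortion P γ}

/-- `γ` is an optimal set of `n`-means for `P`. -/
def IsOptimalSet (P : Measure ℝ) (n : ℕ) (γ : Finset ℝ) : Prop :=
  γ.Nonempty ∧ γ.card ≤ n ∧ distortion P γ = quantErr P n

/-- Uniform distribution on `[a, b]`. -/
noncomputable def unif (a b : ℝ) : Measure ℝ :=
  (ENNReal.ofReal (b - a))⁻¹ • (volume.restrict (Icc a b))

/-- The uniform discrete measure on `{2/3, 5/6, 1}`. -/
noncomputable def discD : Measure ℝ :=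
  (3 : ℝ≥0∞)⁻¹ • (Measure.dirac (2/3) + Measure.dirac (5/6) + Measure.dirac 1)

/-- Mixture `(1/2)P₁ + (1/2)P₂`. -/
noncomputable def mix (P₁ P₂ : Measure ℝ) : Measure ℝ :=
  (2 : ℝ≥0∞)⁻¹ • P₁ + (2 : ℝ≥0∞)⁻¹ • P₂

/-!
The distortion of `γ` for `P` is `∫_{[0,1/2]} d² + (d²(2/3) + d²(5/6) + d²(1)) / 6`, where `d`
is the distance to `γ`. The `m` midpoints of the uniform partition of `[0, 1/2]` into `m`
cells, together with the three atoms, form an `(m + 3)`-point set of distortion `1 / (96 m²)`.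
Conversely, for `n` points the set `{d² ≤ t}` is covered by `n` intervals of length `2√t`, so
by the layer-cake formula the integral over `[0, 1/2]` is at least
`∫_0^{1/(16n²)} (1/2 - 2n√t) dt = 1 / (96 n²)`. Hence `1/(96 n²) ≤ V_n ≤ 1/(96 (n-3)²)`, so
`n² V_n → 1/96`, and then `2 log n / (-log V_n) → 1`.
-/

open Topology

noncomputable def minSqDist (γ : Finset ℝ) (x : ℝ) : ℝ := ⨅ c : γ, (x - (c : ℝ)) ^ 2

section minSqDist

variable {γ : Finset ℝ} {c : ℝ}

lemma minSqDist_eq_inf' (hγ : γ.Nonempty) (x : ℝ) :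
    minSqDist γ x = γ.inf' hγ (fun c => (x - c) ^ 2) := by
  rw [Finset.inf'_eq_csInf_image, minSqDist, iInf, Set.image_eq_range]
  rfl

lemma minSqDist_nonneg (γ : Finset ℝ) (x : ℝ) : 0 ≤ minSqDist γ x :=
  Real.iInf_nonneg fun _ => sq_nonneg _

lemma minSqDist_le_sq_sub (hc : c ∈ γ) (x : ℝ) : minSqDist γ x ≤ (x - c) ^ 2 :=
  (minSqDist_eq_inf' ⟨c, hc⟩ x).trans_le (Finset.inf'_le _ hc)

lemma minSqDist_of_mem (hc : c ∈ γ) : minSqDist γ c = 0 :=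
  le_antisymm (by simpa using minSqDist_le_sq_sub hc c) (minSqDist_nonneg γ c)

lemma exists_minSqDist_eq (hγ : γ.Nonempty) (x : ℝ) :
    ∃ c ∈ γ, minSqDist γ x = (x - c) ^ 2 := by
  obtain ⟨c, hc, hx⟩ := Finset.exists_mem_eq_inf' hγ (fun c => (x - c) ^ 2)
  exact ⟨c, hc, (minSqDist_eq_inf' hγ x).trans hx⟩

lemma continuous_minSqDist (γ : Finset ℝ) : Continuous (minSqDist γ) := by
  rcases γ.eq_empty_or_nonempty with rfl | hγ
  · convert continuous_const (y := (0 : ℝ)) with x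
    exact Real.iInf_of_isEmpty _
  · have : Continuous fun x => γ.inf' hγ (fun c => (x - c) ^ 2) :=
      Continuous.finset_inf'_apply hγ fun c _ => by fun_prop
    exact this.congr fun x => (minSqDist_eq_inf' hγ x).symm

end minSqDist

lemma distortion_nonneg (P : Measure ℝ) (γ : Finset ℝ) : 0 ≤ distortion P γ :=
  integral_nonneg (minSqDist_nonneg γ)

lemma quantErr_le_distortion (P : Measure ℝ) {n : ℕ} {γ : Finset ℝ} (hγ : γ.Nonempty)
    (hn : γ.card ≤ n) : quantErr P n ≤ distortion P γ :=
  csInf_le ⟨0, by rintro _ ⟨γ, -, -, rfl⟩; exact distortion_nonneg P γ⟩ ⟨γ, hγ, hn, rfl⟩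

lemma le_quantErr {P : Measure ℝ} {n : ℕ} {v : ℝ} (hn : n ≠ 0)
    (h : ∀ γ : Finset ℝ, γ.Nonempty → γ.card ≤ n → v ≤ distortion P γ) : v ≤ quantErr P n :=
  le_csInf ⟨_, {0}, Finset.singleton_nonempty 0, by simpa [Nat.one_le_iff_ne_zero], rfl⟩
    (by rintro _ ⟨γ, hγ, hcard, rfl⟩; exact h γ hγ hcard)

lemma integral_unif {a b : ℝ} (hab : a ≤ b) (f : ℝ → ℝ) :
    ∫ x, f x ∂unif a b = (b - a)⁻¹ * ∫ x in Icc a b, f x := by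
  rw [unif, integral_smul_measure, ENNReal.toReal_inv, ENNReal.toReal_ofReal (sub_nonneg.2 hab),
    smul_eq_mul]

lemma integrable_unif {a b : ℝ} (hab : a < b) {f : ℝ → ℝ} (hf : Continuous f) :
    Integrable f (unif a b) :=
  hf.integrableOn_Icc.smul_measure (by simpa using hab)

lemma integrable_discD (f : ℝ → ℝ) : Integrable f discD := by
  refine Integrable.smul_measure ?_ (by simp)
  refine (Integrable.add_measure ?_ ?_).add_measure ?_ <;> exact integrable_dirac (by simp)

lemma integral_discD (f : ℝ → ℝ) : ∫ x, f x ∂discD = (f (2/3) + f (5/6) + f 1) / 3 := by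
  have hδ : ∀ a : ℝ, Integrable f (Measure.dirac a) := fun a => integrable_dirac (by simp)
  rw [discD, integral_smul_measure, integral_add_measure ((hδ _).add_measure (hδ _)) (hδ _),
    integral_add_measure (hδ _) (hδ _)]
  simp only [integral_dirac, smul_eq_mul, ENNReal.toReal_inv]
  norm_num
  ring

lemma integral_mix {P₁ P₂ : Measure ℝ} {f : ℝ → ℝ} (h₁ : Integrable f P₁)
    (h₂ : Integrable f P₂) :
    ∫ x, f x ∂mix P₁ P₂ = (∫ x, f x ∂P₁ + ∫ x, f x ∂P₂) / 2 := by
  rw [mix, integral_add_measure (h₁.smul_measure (by simp)) (h₂.smul_measure (by simp)),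
    integral_smul_measure, integral_smul_measure]
  simp only [smul_eq_mul, ENNReal.toReal_inv]
  norm_num
  ring

lemma distortion_mix_unif_discD (γ : Finset ℝ) :
    distortion (mix (unif 0 (1/2)) discD) γ = (∫ x in Icc (0:ℝ) (1/2), minSqDist γ x) +
      (minSqDist γ (2/3) + minSqDist γ (5/6) + minSqDist γ 1) / 6 := by
  change ∫ x, minSqDist γ x ∂_ = _
  rw [integral_mix (integrable_unif (by norm_num) (continuous_minSqDist γ)) (integrable_discD _),
    integral_unif (by norm_num), integral_discD]
  ring

lemma volume_setOf_minSqDist_le {γ : Finset ℝ} (hγ : γ.Nonempty) (t : ℝ) :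
    volume {x | minSqDist γ x ≤ t} ≤ γ.card * ENNReal.ofReal (2 * √t) := by
  have hcover : {x | minSqDist γ x ≤ t} ⊆ ⋃ c ∈ γ, Metric.closedBall c √t := by
    intro x hx
    obtain ⟨c, hc, hxc⟩ := exists_minSqDist_eq hγ x
    exact Set.mem_biUnion hc (Real.abs_le_sqrt (hxc ▸ hx))
  calc volume {x | minSqDist γ x ≤ t}
      ≤ ∑ c ∈ γ, volume (Metric.closedBall c √t) :=
        (measure_mono hcover).trans (measure_biUnion_finset_le γ _)
    _ = γ.card * ENNReal.ofReal (2 * √t) := by simp [Real.volume_closedBall]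

lemma ofReal_sub_le_volume_Icc_setOf_lt {γ : Finset ℝ} (hγ : γ.Nonempty) {n : ℕ}
    (hn : γ.card ≤ n) (a b t : ℝ) :
    ENNReal.ofReal (b - a - 2 * n * √t) ≤
      volume.restrict (Icc a b) {x | t < minSqDist γ x} := by
  have hle : volume {x | minSqDist γ x ≤ t} ≤ ENNReal.ofReal (2 * n * √t) := by
    refine (volume_setOf_minSqDist_le hγ t).trans ?_
    rw [mul_comm 2 (n : ℝ), mul_assoc, ENNReal.ofReal_mul n.cast_nonneg, ENNReal.ofReal_natCast]
    gcongr
  have hdiff : Icc a b \ {x | minSqDist γ x ≤ t} = {x | t < minSqDist γ x} ∩ Icc a b := by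
    ext; simp [and_comm]
  calc ENNReal.ofReal (b - a - 2 * n * √t)
      = volume (Icc a b) - ENNReal.ofReal (2 * n * √t) := by
        rw [Real.volume_Icc, ENNReal.ofReal_sub _ (by positivity)]
    _ ≤ volume (Icc a b) - volume {x | minSqDist γ x ≤ t} := by gcongr
    _ ≤ volume.restrict (Icc a b) {x | t < minSqDist γ x} := by
        rw [Measure.restrict_apply' measurableSet_Icc, ← hdiff]
        exact le_measure_sdiff

lemma integral_sqrt_zero_sq {s : ℝ} (hs : 0 ≤ s) :
    ∫ t in (0:ℝ)..s ^ 2, √t = 2 / 3 * s ^ 3 := by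
  simp_rw [Real.sqrt_eq_rpow]
  rw [integral_rpow (Or.inl (by norm_num)), Real.zero_rpow (by norm_num),
    ← Real.rpow_natCast s 2, ← Real.rpow_mul hs]
  norm_num
  rw [← Real.rpow_natCast s 3]
  ring_nf

lemma integral_sub_mul_sqrt (L k : ℝ) {s : ℝ} (hs : 0 ≤ s) :
    ∫ t in (0:ℝ)..s ^ 2, (L - k * √t) = L * s ^ 2 - 2 * k / 3 * s ^ 3 := by
  rw [intervalIntegral.integral_sub intervalIntegrable_const
      (Real.continuous_sqrt.intervalIntegrable _ _ |>.const_mul k),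
    intervalIntegral.integral_const, intervalIntegral.integral_const_mul, integral_sqrt_zero_sq hs]
  simp only [smul_eq_mul]
  ring

lemma div_le_integral_Icc_minSqDist {γ : Finset ℝ} (hγ : γ.Nonempty) {n : ℕ} (hn : γ.card ≤ n)
    {a b : ℝ} (hab : a ≤ b) :
    (b - a) ^ 3 / (12 * n ^ 2) ≤ ∫ x in Icc a b, minSqDist γ x := by
  have hn0 : (0 : ℝ) < n := Nat.cast_pos.2 (hγ.card_pos.trans_le hn)
  set s := (b - a) / (2 * n) with hs_def
  have hs : 0 ≤ s := by rw [hs_def]; exact div_nonneg (sub_nonneg.2 hab) (by positivity)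
  set g : ℝ → ℝ := fun t => b - a - 2 * n * √t
  have hg_nonneg : ∀ t ∈ Ioc 0 (s ^ 2), 0 ≤ g t := by
    intro t ht
    have hts : √t ≤ s := (Real.sqrt_le_left hs).2 ht.2
    have h2ns : 2 * n * s = b - a := by rw [hs_def]; field_simp
    nlinarith
  have hg_int : IntegrableOn g (Ioc 0 (s ^ 2)) :=
    (by fun_prop : Continuous g).integrableOn_Icc.mono_set Ioc_subset_Icc_self
  have hF_int : Integrable (minSqDist γ) (volume.restrict (Icc a b)) :=
    (continuous_minSqDist γ).integrableOn_Icc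
  have hF_nonneg : 0 ≤ᵐ[volume.restrict (Icc a b)] minSqDist γ :=
    Eventually.of_forall (minSqDist_nonneg γ)
  rw [← ENNReal.ofReal_le_ofReal_iff (integral_nonneg (minSqDist_nonneg γ)),
    ofReal_integral_eq_lintegral_ofReal hF_int hF_nonneg,
    lintegral_eq_lintegral_meas_lt _ hF_nonneg hF_int.aemeasurable]
  calc ENNReal.ofReal ((b - a) ^ 3 / (12 * n ^ 2))
      = ENNReal.ofReal (∫ t in Ioc 0 (s ^ 2), g t) := by
        rw [← intervalIntegral.integral_of_le (sq_nonneg s), integral_sub_mul_sqrt _ _ hs, hs_def]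
        congr 1
        field_simp
        ring
    _ = ∫⁻ t in Ioc 0 (s ^ 2), ENNReal.ofReal (g t) :=
        ofReal_integral_eq_lintegral_ofReal hg_int
          (ae_restrict_of_forall_mem measurableSet_Ioc hg_nonneg)
    _ ≤ ∫⁻ t in Ioc 0 (s ^ 2), volume.restrict (Icc a b) {x | t < minSqDist γ x} :=
        lintegral_mono fun t => ofReal_sub_le_volume_Icc_setOf_lt hγ hn a b t
    _ ≤ ∫⁻ t in Ioi 0, volume.restrict (Icc a b) {x | t < minSqDist γ x} :=
        lintegral_mono_set Ioc_subset_Ioi_self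

noncomputable def uniformMidpoints (a b : ℝ) (m : ℕ) : Finset ℝ :=
  (Finset.range m).image fun i : ℕ => a + (2 * i + 1) * ((b - a) / (2 * m))

lemma card_uniformMidpoints_le (a b : ℝ) (m : ℕ) : (uniformMidpoints a b m).card ≤ m :=
  Finset.card_image_le.trans (Finset.card_range m).le

lemma integral_sq_sub_center (c h : ℝ) :
    ∫ x in (c - h)..(c + h), (x - c) ^ 2 = 2 * h ^ 3 / 3 := by
  rw [intervalIntegral.integral_comp_sub_right (fun x => x ^ 2) c, integral_pow]
  ring

lemma integral_Icc_minSqDist_le {m : ℕ} (hm : m ≠ 0) {a b : ℝ} (hab : a ≤ b) {γ : Finset ℝ}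
    (hγ : uniformMidpoints a b m ⊆ γ) :
    ∫ x in Icc a b, minSqDist γ x ≤ (b - a) ^ 3 / (12 * m ^ 2) := by
  have hm0 : (0 : ℝ) < m := Nat.cast_pos.2 (Nat.pos_of_ne_zero hm)
  set h := (b - a) / (2 * m) with h_def
  have hh : 0 ≤ h := div_nonneg (sub_nonneg.2 hab) (by positivity)
  set p : ℕ → ℝ := fun i => a + 2 * i * h
  have hcell : ∀ i < m, ∫ x in p i..p (i + 1), minSqDist γ x ≤ 2 * h ^ 3 / 3 := by
    intro i hi
    set c := a + (2 * i + 1) * h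
    have hc : c ∈ γ := hγ (Finset.mem_image.2 ⟨i, Finset.mem_range.2 hi, rfl⟩)
    have hpi : p i = c - h := by simp only [p, c]; ring
    have hpi' : p (i + 1) = c + h := by simp only [p, c]; push_cast; ring
    rw [hpi, hpi', ← integral_sq_sub_center c h]
    refine intervalIntegral.integral_mono_on (by linarith)
      ((continuous_minSqDist γ).intervalIntegrable _ _)
      ((by fun_prop : Continuous fun x : ℝ => (x - c) ^ 2).intervalIntegrable _ _) ?_
    exact fun x _ => minSqDist_le_sq_sub hc x
  have hp0 : p 0 = a := by simp [p]
  have hpm : p m = b := by simp only [p, h_def]; field_simp; ring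
  calc ∫ x in Icc a b, minSqDist γ x
      = ∑ i ∈ Finset.range m, ∫ x in p i..p (i + 1), minSqDist γ x := by
        rw [intervalIntegral.sum_integral_adjacent_intervals
          (fun k _ => (continuous_minSqDist γ).intervalIntegrable _ _), hp0, hpm,
          intervalIntegral.integral_of_le hab, integral_Icc_eq_integral_Ioc]
    _ ≤ ∑ _i ∈ Finset.range m, 2 * h ^ 3 / 3 :=
        Finset.sum_le_sum fun i hi => hcell i (Finset.mem_range.1 hi)
    _ = (b - a) ^ 3 / (12 * m ^ 2) := by
        rw [Finset.sum_const, Finset.card_range, nsmul_eq_mul, h_def]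
        field_simp
        ring

lemma le_quantErr_mix_unif_discD {n : ℕ} (hn : n ≠ 0) :
    1 / 96 / n ^ 2 ≤ quantErr (mix (unif 0 (1/2)) discD) n := by
  refine le_quantErr hn fun γ hγ hcard => ?_
  have hIcc := div_le_integral_Icc_minSqDist hγ hcard (by norm_num : (0:ℝ) ≤ 1/2)
  have h₁ := minSqDist_nonneg γ (2/3)
  have h₂ := minSqDist_nonneg γ (5/6)
  have h₃ := minSqDist_nonneg γ 1
  rw [distortion_mix_unif_discD]
  calc (1 / 96 / n ^ 2 : ℝ) = (1/2 - 0) ^ 3 / (12 * n ^ 2) := by ring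
    _ ≤ _ := by linarith

lemma quantErr_mix_unif_discD_add_three_le {m : ℕ} (hm : m ≠ 0) :
    quantErr (mix (unif 0 (1/2)) discD) (m + 3) ≤ 1 / 96 / m ^ 2 := by
  set γ := uniformMidpoints 0 (1/2) m ∪ {2/3, 5/6, 1}
  have hcard : γ.card ≤ m + 3 :=
    (Finset.card_union_le _ _).trans
      (add_le_add (card_uniformMidpoints_le _ _ _) Finset.card_le_three)
  have hIcc : ∫ x in Icc (0:ℝ) (1/2), minSqDist γ x ≤ (1/2 - 0) ^ 3 / (12 * m ^ 2) :=
    integral_Icc_minSqDist_le hm (by norm_num) Finset.subset_union_left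
  refine (quantErr_le_distortion _ ⟨1, by simp [γ]⟩ hcard).trans ?_
  rw [distortion_mix_unif_discD, minSqDist_of_mem (c := 2/3) (by simp [γ]),
    minSqDist_of_mem (c := 5/6) (by simp [γ]), minSqDist_of_mem (c := 1) (by simp [γ])]
  calc _ ≤ (1/2 - 0) ^ 3 / (12 * m ^ 2 : ℝ) := by linarith
    _ = 1 / 96 / m ^ 2 := by ring

lemma tendsto_natCast_sq_mul_of_bounds {V : ℕ → ℝ} {C : ℝ} (k : ℕ)
    (hlow : ∀ n, n ≠ 0 → C / n ^ 2 ≤ V n) (hup : ∀ m, m ≠ 0 → V (m + k) ≤ C / m ^ 2) :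
    Tendsto (fun n : ℕ => (n : ℝ) ^ 2 * V n) atTop (𝓝 C) := by
  rw [← tendsto_add_atTop_iff_nat k]
  have hupper : Tendsto (fun m : ℕ => (1 + (k : ℝ) / m) ^ 2 * C) atTop (𝓝 C) := by
    have hk := tendsto_const_div_atTop_nhds_zero_nat (k : ℝ)
    simpa using ((tendsto_const_nhds (x := (1 : ℝ)) |>.add hk).pow 2).mul_const C
  refine tendsto_of_tendsto_of_tendsto_of_le_of_le' tendsto_const_nhds hupper ?_ ?_
  · filter_upwards [eventually_ne_atTop 0] with m hm
    have hmk : ((m + k : ℕ) : ℝ) ≠ 0 := by positivity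
    calc C = ((m + k : ℕ) : ℝ) ^ 2 * (C / ((m + k : ℕ) : ℝ) ^ 2) := by field_simp
      _ ≤ _ := by gcongr; exact hlow _ (by omega)
  · filter_upwards [eventually_ne_atTop 0] with m hm
    have hm' : (m : ℝ) ≠ 0 := by positivity
    calc ((m + k : ℕ) : ℝ) ^ 2 * V (m + k) ≤ ((m + k : ℕ) : ℝ) ^ 2 * (C / m ^ 2) := by
          gcongr; exact hup m hm
      _ = (1 + (k : ℝ) / m) ^ 2 * C := by push_cast; field_simp

lemma tendsto_two_mul_log_div_neg_log_of_tendsto {V : ℕ → ℝ} {C : ℝ} (hC : 0 < C)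
    (h : Tendsto (fun n : ℕ => (n : ℝ) ^ 2 * V n) atTop (𝓝 C)) :
    Tendsto (fun n : ℕ => 2 * log n / -log (V n)) atTop (𝓝 1) := by
  have hlog : Tendsto (fun n : ℕ => 2 * log n) atTop atTop :=
    (tendsto_log_atTop.comp tendsto_natCast_atTop_atTop).const_mul_atTop two_pos
  have hratio : Tendsto (fun n : ℕ => log ((n : ℝ) ^ 2 * V n) / (2 * log n)) atTop (𝓝 0) :=
    ((continuousAt_log hC.ne').tendsto.comp h).div_atTop hlog
  have hinv :
      Tendsto (fun n : ℕ => (1 - log ((n : ℝ) ^ 2 * V n) / (2 * log n))⁻¹) atTop (𝓝 1) := by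
    simpa using (tendsto_const_nhds.sub hratio).inv₀ (by norm_num : (1 : ℝ) - 0 ≠ 0)
  refine hinv.congr' ?_
  filter_upwards [eventually_gt_atTop 1, h.eventually_const_lt hC] with n hn hpos
  have hV : 0 < V n := pos_of_mul_pos_right hpos (sq_nonneg _)
  have hL : 0 < 2 * log n := by
    have := log_pos (by exact_mod_cast hn : (1 : ℝ) < n)
    positivity
  rw [log_mul (by positivity) hV.ne', log_pow, one_sub_div hL.ne', inv_div]
  push_cast
  ring

theorem stmt6 (P : Measure ℝ) (hP : P = mix (unif 0 (1/2)) discD) :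
    Tendsto (fun n : ℕ => (n : ℝ) ^ 2 * quantErr P n) atTop (nhds (1/96)) ∧
    Tendsto (fun n : ℕ => 2 * Real.log n / (- Real.log (quantErr P n))) atTop (nhds 1) := by
  subst hP
  have hlim := tendsto_natCast_sq_mul_of_bounds 3 (fun _ hn => le_quantErr_mix_unif_discD hn)
    (fun _ hm => quantErr_mix_unif_discD_add_three_le hm)
  exact ⟨hlim, tendsto_two_mul_log_div_neg_log_of_tendsto (by norm_num) hlim⟩
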